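/- arXiv:2601.00122 — 5 statements merged into one kernel-verified Lean document; each statement's English description precedes it below -/
import Mathlib

section
/- Let A = (a_1,...,a_n) be distinct elements of F_q, 0 < k < n, and π ∈ Per(RS(A,k)). Let p_π be the unique polynomial of degree < n with p_π(a_j) = a_{π(j)} for all j. Then for every i with 0 ≤ i < k, there exists f_i ∈ F_q[x] of degree < k such that p_π^i(a_j) = f_i(a_j) for all j = 1,...,n. -/
open Polynomial

/-- If π ∈ Per(RS(A,k)) with 0 < k < n and p_π is the interpolating
polynomial of degree < n with p_π(a_j) = a_{π(j)}, then for each 0 ≤ i < k there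
is f_i of degree < k with p_π^i(a_j) = f_i(a_j) for all j. -/
theorem power_interp_poly_in_RS {F : Type*} [Field F] [Fintype F] {n k : ℕ}
    (hk : 0 < k) (hkn : k < n)
    (a : Fin n → F) (ha : Function.Injective a)
    (π : Equiv.Perm (Fin n))
    (hπ : (fun v : Fin n → F => fun i => v (π i)) ''
        {v : Fin n → F | ∃ f : F[X], f.degree < (k : ℕ) ∧ v = fun i => f.eval (a i)} =
      {v : Fin n → F | ∃ f : F[X], f.degree < (k : ℕ) ∧ v = fun i => f.eval (a i)})
    (pπ : F[X]) (hdeg : pπ.degree < (n : ℕ))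
    (hval : ∀ j, pπ.eval (a j) = a (π j)) :
    ∀ i < k, ∃ fi : F[X], fi.degree < (k : ℕ) ∧
      ∀ j, (pπ ^ i).eval (a j) = fi.eval (a j) := by
  intro i hi
  have hv : (fun j => (a j) ^ i) ∈
      {v : Fin n → F | ∃ f : F[X], f.degree < (k : ℕ) ∧ v = fun j => f.eval (a j)} := by
    refine ⟨X ^ i, ?_, by simp⟩
    simpa [Polynomial.degree_X_pow] using (Nat.cast_lt.mpr hi : (i : WithBot ℕ) < k)
  have hmem : (fun j => (a (π j)) ^ i) ∈
      {v : Fin n → F | ∃ f : F[X], f.degree < (k : ℕ) ∧ v = fun j => f.eval (a j)} := by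
    rw [← hπ]
    exact ⟨_, hv, rfl⟩
  obtain ⟨fi, hfid, hfie⟩ := hmem
  refine ⟨fi, hfid, fun j => ?_⟩
  have := congrFun hfie j
  simp only [Polynomial.eval_pow, hval j]
  exact this
end

section
/- Let A = (a_1,...,a_n) be distinct elements of F_q, 1 < k < n-1, and π ∈ Per(RS(A,k)). Then the unique polynomial p_π of degree < n with p_π(a_j) = a_{π(j)} satisfies deg(p_π) < min{k, n-k}. -/
open Polynomial Finset

lemma coeff_basis_eq {F : Type*} [Field F] {ι : Type*} [DecidableEq ι]
    {s : Finset ι} {v : ι → F} {i : ι} (hi : i ∈ s) :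
    (Lagrange.basis s v i).coeff (#s - 1) = Lagrange.nodalWeight s v i := by
  rw [Lagrange.basis_eq_prod_sub_inv_mul_nodal_div hi, ← Lagrange.nodal_erase_eq_nodal_div hi,
    coeff_C_mul]
  have h1 : (Lagrange.nodal (s.erase i) v).natDegree = #s - 1 := by
    rw [Lagrange.natDegree_nodal, card_erase_of_mem hi]
  rw [← h1, (Lagrange.nodal_monic).coeff_natDegree, mul_one]

lemma sum_nodalWeight_eval {F : Type*} [Field F] {ι : Type*} [DecidableEq ι]
    {s : Finset ι} {v : ι → F} (hvs : Set.InjOn v s) {p : F[X]}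
    (hp : p.degree < (#s : ℕ)) :
    p.coeff (#s - 1) = ∑ i ∈ s, Lagrange.nodalWeight s v i * p.eval (v i) := by
  conv_lhs => rw [Lagrange.eq_interpolate hvs hp]
  rw [Lagrange.interpolate_apply, finset_sum_coeff]
  exact sum_congr rfl fun i hi => by rw [coeff_C_mul, coeff_basis_eq hi, mul_comm]

lemma exists_dual_poly {F : Type*} [Field F] {n k : ℕ} (hkn : k < n)
    (a : Fin n → F) (ha : Function.Injective a) (w : Fin n → F)
    (hw : ∀ f : F[X], f.degree < (k : ℕ) → ∑ j, w j * f.eval (a j) = 0) :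
    ∃ h : F[X], h.degree < ((n - k : ℕ) : WithBot ℕ) ∧
      ∀ j, w j = Lagrange.nodalWeight Finset.univ a j * h.eval (a j) := by
  classical
  have hvs : Set.InjOn a (Finset.univ : Finset (Fin n)) := ha.injOn
  have hcard : #(Finset.univ : Finset (Fin n)) = n := by simp
  set u : Fin n → F := Lagrange.nodalWeight Finset.univ a with hu
  have hu0 : ∀ j, u j ≠ 0 := fun j => Lagrange.nodalWeight_ne_zero hvs (mem_univ j)
  set h : F[X] := Lagrange.interpolate Finset.univ a (fun j => w j / u j) with hh
  have hdegh : h.degree < ((n : ℕ) : WithBot ℕ) := by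
    have := Lagrange.degree_interpolate_lt (fun j => w j / u j) hvs
    rwa [hcard] at this
  have heval : ∀ j, h.eval (a j) = w j / u j := fun j =>
    Lagrange.eval_interpolate_at_node _ hvs (mem_univ j)
  have hwuh : ∀ j, w j = u j * h.eval (a j) := by
    intro j
    rw [heval j, mul_div_cancel₀ _ (hu0 j)]
  have hcoeff : ∀ t, t < k → h.coeff (n - 1 - t) = 0 := by
    intro t
    induction t using Nat.strong_induction_on with
    | _ t IH =>
      intro ht
      have htn : t ≤ n - 1 := by omega
      have hdht : h.degree ≤ ((n - 1 - t : ℕ) : WithBot ℕ) := by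
        rw [Polynomial.degree_le_iff_coeff_zero]
        intro m hm
        have hm' : n - 1 - t < m := by exact_mod_cast hm
        by_cases hmn : n ≤ m
        · exact coeff_eq_zero_of_degree_lt
            (lt_of_lt_of_le hdegh (by exact_mod_cast Nat.cast_le.mpr hmn))
        · push_neg at hmn
          have hmeq : n - 1 - (n - 1 - m) = m := by omega
          rw [← hmeq]
          exact IH (n - 1 - m) (by omega) (by omega)
      have hdegp : (h * X ^ t).degree < ((n : ℕ) : WithBot ℕ) := by
        calc (h * X ^ t).degree ≤ h.degree + (X ^ t : F[X]).degree := degree_mul_le _ _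
          _ ≤ ((n - 1 - t : ℕ) : WithBot ℕ) + ((t : ℕ) : WithBot ℕ) := by
              rw [degree_X_pow]; exact add_le_add hdht le_rfl
          _ = (((n - 1 - t) + t : ℕ) : WithBot ℕ) := by rw [Nat.cast_add]
          _ < ((n : ℕ) : WithBot ℕ) := by
              apply Nat.cast_lt.mpr; omega
      have hA : (h * X ^ t).coeff (n - 1) =
          ∑ j, u j * (h * X ^ t).eval (a j) := by
        have := sum_nodalWeight_eval hvs (p := h * X ^ t) (by rwa [hcard])
        rwa [hcard] at this
      have hsum : ∑ j, u j * (h * X ^ t).eval (a j) = 0 := by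
        have h1 : ∀ j, u j * (h * X ^ t).eval (a j) = w j * (X ^ t : F[X]).eval (a j) := by
          intro j
          rw [eval_mul, hwuh j]; ring
        rw [Finset.sum_congr rfl (fun j _ => h1 j)]
        exact hw (X ^ t) (by rw [degree_X_pow]; exact_mod_cast ht)
      have hc : (h * X ^ t).coeff (n - 1) = h.coeff (n - 1 - t) := by
        rw [coeff_mul_X_pow', if_pos htn]
      rw [← hc, hA, hsum]
  refine ⟨h, ?_, hwuh⟩
  rw [Polynomial.degree_lt_iff_coeff_zero]
  intro m hm
  have hm' : n - k ≤ m := by exact_mod_cast hm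
  by_cases hmn : n ≤ m
  · exact coeff_eq_zero_of_degree_lt
      (lt_of_lt_of_le hdegh (by exact_mod_cast Nat.cast_le.mpr hmn))
  · push_neg at hmn
    have hmeq : n - 1 - (n - 1 - m) = m := by omega
    rw [← hmeq]
    exact hcoeff (n - 1 - m) (by omega)

/-- For 1 < k < n-1 and π ∈ Per(RS(A,k)), the interpolating
polynomial p_π (of degree < n with p_π(a_j) = a_{π(j)}) has degree < min(k, n-k). -/
theorem degree_interp_lt_min {F : Type*} [Field F] [Fintype F] {n k : ℕ}
    (hk : 1 < k) (hkn : k < n - 1)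
    (a : Fin n → F) (ha : Function.Injective a)
    (π : Equiv.Perm (Fin n))
    (hπ : (fun v : Fin n → F => fun i => v (π i)) ''
        {v : Fin n → F | ∃ f : F[X], f.degree < (k : ℕ) ∧ v = fun i => f.eval (a i)} =
      {v : Fin n → F | ∃ f : F[X], f.degree < (k : ℕ) ∧ v = fun i => f.eval (a i)})
    (pπ : F[X]) (hdeg : pπ.degree < (n : ℕ))
    (hval : ∀ j, pπ.eval (a j) = a (π j)) :
    pπ.degree < ((min k (n - k) : ℕ) : ℕ) := by
  classical
  have hn4 : 4 ≤ n := by omega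
  have hkn' : k + 2 ≤ n := by omega
  have hvs : Set.InjOn a (Finset.univ : Finset (Fin n)) := ha.injOn
  have hcard : #(Finset.univ : Finset (Fin n)) = n := by simp
  set S := {v : Fin n → F | ∃ f : F[X], f.degree < (k : ℕ) ∧ v = fun i => f.eval (a i)} with hS
  set u : Fin n → F := Lagrange.nodalWeight Finset.univ a with hu
  have hu0 : ∀ j, u j ≠ 0 := fun j => Lagrange.nodalWeight_ne_zero hvs (mem_univ j)
  -- key surjectivity-type fact
  have key : ∀ f : F[X], f.degree < (k : ℕ) →
      ∃ g : F[X], g.degree < (k : ℕ) ∧ ∀ i, g.eval (a (π i)) = f.eval (a i) := by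
    intro f hf
    have hs : (fun i => f.eval (a i)) ∈ S := ⟨f, hf, rfl⟩
    rw [← hπ] at hs
    obtain ⟨v, ⟨g, hg, rfl⟩, hv⟩ := hs
    exact ⟨g, hg, fun i => congrFun hv i⟩
  -- Part 1: pπ.degree < k
  have hXmem : (fun i => (X : F[X]).eval (a i)) ∈ S := ⟨X, by
    rw [degree_X]; exact_mod_cast hk, rfl⟩
  have himg : (fun i => a (π i)) ∈ S := by
    rw [← hπ]
    refine ⟨fun i => (X : F[X]).eval (a i), hXmem, ?_⟩
    funext i; simp
  obtain ⟨f1, hf1deg, hf1⟩ := himg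
  have hpf1 : pπ = f1 := by
    apply Polynomial.eq_of_degrees_lt_of_eval_index_eq Finset.univ hvs
      (by rwa [hcard]) (by rw [hcard]; exact lt_of_lt_of_le hf1deg (by exact_mod_cast (by omega : k ≤ n)))
    intro i _
    rw [hval i, congrFun hf1 i]
  have hP1 : pπ.degree < ((k : ℕ) : WithBot ℕ) := hpf1 ▸ hf1deg
  -- Part 2: pπ.degree < n - k
  by_cases hp0 : pπ = 0
  · rw [hp0, degree_zero]
    exact WithBot.bot_lt_coe _
  have hw1 : ∀ f : F[X], f.degree < (k : ℕ) → ∑ j, u (π j) * f.eval (a j) = 0 := by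
    intro f hf
    obtain ⟨g, hg, hge⟩ := key f hf
    rw [Finset.sum_congr rfl (fun j _ => by rw [← hge j]),
      Equiv.sum_comp π (fun i => u i * g.eval (a i))]
    have h3 := sum_nodalWeight_eval hvs (p := g)
      (by rw [hcard]; exact lt_of_lt_of_le hg (by exact_mod_cast (by omega : k ≤ n)))
    rw [hcard] at h3
    rw [← h3]
    exact coeff_eq_zero_of_degree_lt
      (lt_of_lt_of_le hg (by exact_mod_cast (by omega : k ≤ n - 1)))
  have hw2 : ∀ f : F[X], f.degree < (k : ℕ) →
      ∑ j, (u (π j) * a (π j)) * f.eval (a j) = 0 := by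
    intro f hf
    obtain ⟨g, hg, hge⟩ := key f hf
    have hXg : (X * g : F[X]).degree < ((k + 1 : ℕ) : WithBot ℕ) := by
      calc (X * g : F[X]).degree ≤ (X : F[X]).degree + g.degree := degree_mul_le _ _
        _ = 1 + g.degree := by rw [degree_X]
        _ < 1 + ((k : ℕ) : WithBot ℕ) := by
            exact WithBot.add_lt_add_left (by simp) hg
        _ = ((k + 1 : ℕ) : WithBot ℕ) := by
            push_cast; ring
    have hterm : ∀ j, (u (π j) * a (π j)) * f.eval (a j)
        = u (π j) * (X * g : F[X]).eval (a (π j)) := by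
      intro j
      rw [eval_mul, eval_X, ← hge j]; ring
    rw [Finset.sum_congr rfl (fun j _ => hterm j),
      Equiv.sum_comp π (fun i => u i * (X * g : F[X]).eval (a i))]
    have h3 := sum_nodalWeight_eval hvs (p := X * g)
      (by rw [hcard]; exact lt_of_lt_of_le hXg (by exact_mod_cast (by omega : k + 1 ≤ n)))
    rw [hcard] at h3
    rw [← h3]
    exact coeff_eq_zero_of_degree_lt
      (lt_of_lt_of_le hXg (by exact_mod_cast (by omega : k + 1 ≤ n - 1)))
  obtain ⟨h, hhdeg, hh⟩ := exists_dual_poly (by omega : k < n) a ha _ hw1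
  obtain ⟨h', h'deg, hh'⟩ := exists_dual_poly (by omega : k < n) a ha _ hw2
  have hne : h ≠ 0 := by
    intro h0
    have := hh (Fin.mk 0 (by omega))
    rw [h0, eval_zero, mul_zero] at this
    exact hu0 _ this
  rw [← hu] at hh hh'
  have heq : ∀ j, (h * pπ).eval (a j) = h'.eval (a j) := by
    intro j
    have e3 : u j * (h.eval (a j) * pπ.eval (a j)) = u j * h'.eval (a j) := by
      rw [hval j, ← hh' j, hh j]; ring
    rw [eval_mul]
    exact mul_left_cancel₀ (hu0 j) e3
  have hndh : h.natDegree < n - k := by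
    rwa [Polynomial.natDegree_lt_iff_degree_lt hne]
  have hndp : pπ.natDegree < k := by
    rwa [Polynomial.natDegree_lt_iff_degree_lt hp0]
  have hmul : h * pπ = h' := by
    apply Polynomial.eq_of_degrees_lt_of_eval_index_eq Finset.univ hvs ?_ ?_ (fun i _ => heq i)
    · rw [hcard, ← Polynomial.natDegree_lt_iff_degree_lt (mul_ne_zero hne hp0),
        natDegree_mul hne hp0]
      omega
    · rw [hcard]
      exact lt_of_lt_of_le h'deg (by exact_mod_cast (by omega : n - k ≤ n))
  have hP2 : pπ.degree < ((n - k : ℕ) : WithBot ℕ) := by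
    have hle : pπ.degree ≤ (h * pπ).degree := by
      rw [degree_mul]
      exact le_add_of_nonneg_left (zero_le_degree_iff.mpr hne)
    rw [hmul] at hle
    exact lt_of_le_of_lt hle h'deg
  rcases le_total k (n - k) with hmin | hmin
  · rw [min_eq_left hmin]; exact hP1
  · rw [min_eq_right hmin]; exact hP2
end

section
/- Let A = (a_1,...,a_n) be distinct elements of F_q and 1 < k < n-1. Every π ∈ Per(RS(A,k)) is an affine permutation of A; that is, the interpolating polynomial p_π with p_π(a_j) = a_{π(j)} has degree exactly 1. -/
/-!
The dual of `RS(A, k)` is the generalized Reed–Solomon code `{(uᵢ h(aᵢ))ᵢ : deg h < n - k}`,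
`uᵢ` the nodal weights of `A`, and a permutation preserving a code preserves its dual.
Applying `π` to the codeword `(aᵢ)ᵢ` shows `0 < deg p_π < k`. Applying `π` to the dual codewords
`(uᵢ aᵢ ^ m)ᵢ`, `m < n - k`, shows that `h₀ · p_π ^ m` agrees on `A` with some `h_m` of degree
`< n - k`, for one fixed `h₀ ≠ 0`. As `deg p_π < k`, induction on `m` keeps `deg (h₀ · p_π ^ m)`
below `n` and hence below `n - k` up to `m = n - k - 1 ≥ 1`, which forces `deg p_π ≤ 1`.
-/

open Polynomial Finset Lagrange

section PermutationInvariant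

variable {α β : Type*} {S : Set (α → β)} {π : Equiv.Perm α}

theorem comp_perm_mem_iff_of_image_eq (hS : (fun c : α → β => fun i => c (π i)) '' S = S)
    {c : α → β} : (fun i => c (π i)) ∈ S ↔ c ∈ S := by
  conv_lhs => rw [← hS]
  exact π.surjective.injective_comp_right.mem_set_image

def dualCode [Fintype α] [Mul β] [AddCommMonoid β] (S : Set (α → β)) : Set (α → β) :=
  {w | ∀ c ∈ S, w ⬝ᵥ c = 0}

theorem comp_perm_mem_dualCode [Fintype α] [CommSemiring β]
    (hS : (fun c : α → β => fun i => c (π i)) '' S = S) {w : α → β} (hw : w ∈ dualCode S) :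
    (fun i => w (π i)) ∈ dualCode S := by
  intro c hc
  change (w ∘ π) ⬝ᵥ c = 0
  rw [← dotProduct_comp_equiv_symm]
  refine hw _ ((comp_perm_mem_iff_of_image_eq hS).1 ?_)
  simpa [Function.comp_def] using hc

end PermutationInvariant

namespace Polynomial

variable {R : Type*} [Semiring R]

theorem natDegree_pos_of_injective_eval {ι : Type*} [Nontrivial ι] {p : R[X]} {v : ι → R}
    (hp : Function.Injective fun i => p.eval (v i)) : 0 < p.natDegree := by
  rw [Nat.pos_iff_ne_zero]
  intro h
  obtain ⟨c, rfl⟩ : ∃ c, p = C c := ⟨_, eq_C_of_natDegree_eq_zero h⟩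
  obtain ⟨i, j, hij⟩ := exists_pair_ne ι
  exact hij (hp (by simp))

theorem degree_mul_lt_of_degree_lt [NoZeroDivisors R] {p q : R[X]} {a b : ℕ}
    (hp : p.degree < a) (hq : q.degree < b) : (p * q).degree < (a + b - 1 : ℕ) := by
  rcases eq_or_ne p 0 with rfl | hp0
  · rw [zero_mul, degree_zero]; exact WithBot.bot_lt_coe _
  rcases eq_or_ne q 0 with rfl | hq0
  · rw [mul_zero, degree_zero]; exact WithBot.bot_lt_coe _
  rw [← natDegree_lt_iff_degree_lt hp0] at hp
  rw [← natDegree_lt_iff_degree_lt hq0] at hq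
  rw [← natDegree_lt_iff_degree_lt (mul_ne_zero hp0 hq0), natDegree_mul hp0 hq0]
  omega

/-- Each step `m ↦ m + 1` raises the degree by `p.natDegree ≤ n - N`, so the degrees never reach
`n` and stay below `N` for all `m < N`; at `m = N - 1` this forces `p.natDegree ≤ 1`. -/
theorem natDegree_le_one_of_degree_mul_pow_lt [NoZeroDivisors R] {q p : R[X]} {N n : ℕ}
    (hq0 : q ≠ 0) (hN : 2 ≤ N) (hNn : N + p.natDegree ≤ n) (hq : q.degree < N)
    (H : ∀ m < N, (q * p ^ m).degree < n → (q * p ^ m).degree < N) : p.natDegree ≤ 1 := by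
  rcases eq_or_ne p 0 with rfl | hp0
  · simp
  have hne : ∀ m, q * p ^ m ≠ 0 := fun m => mul_ne_zero hq0 (pow_ne_zero m hp0)
  have hdeg : ∀ m, (q * p ^ m).natDegree = q.natDegree + m * p.natDegree := fun m => by
    rw [natDegree_mul hq0 (pow_ne_zero m hp0), natDegree_pow]
  have hchain : ∀ m < N, q.natDegree + m * p.natDegree < N := by
    intro m
    induction m with
    | zero => intro _; simpa using (natDegree_lt_iff_degree_lt hq0).2 hq
    | succ m ih =>
      intro hm
      have hlt := ih (by omega)
      rw [← hdeg, natDegree_lt_iff_degree_lt (hne _)]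
      refine H _ hm ?_
      rw [← natDegree_lt_iff_degree_lt (hne _), hdeg, Nat.succ_mul]
      omega
  obtain ⟨M, rfl⟩ : ∃ M, N = M + 1 := ⟨N - 1, by omega⟩
  have := hchain M (by omega)
  nlinarith

end Polynomial

section ReedSolomon

variable {F ι : Type*} [Field F] [Fintype ι] {v : ι → F} {k : ℕ}

def rsCode (v : ι → F) (k : ℕ) : Set (ι → F) :=
  {c | ∃ f : F[X], f.degree < (k : ℕ) ∧ c = fun i => f.eval (v i)}

theorem degree_lt_of_eval_mem_rsCode (hv : Function.Injective v) (hk : k ≤ Fintype.card ι)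
    {p : F[X]} (hp : p.degree < Fintype.card ι) (hmem : (fun i => p.eval (v i)) ∈ rsCode v k) :
    p.degree < k := by
  obtain ⟨f, hf, hpf⟩ := hmem
  have hfn : f.degree < Fintype.card ι := hf.trans_le (by exact_mod_cast hk)
  rw [← card_univ] at hp hfn
  rwa [eq_of_degrees_lt_of_eval_index_eq univ hv.injOn hp hfn fun i _ => congrFun hpf i]

variable [DecidableEq ι]

theorem sum_nodalWeight_mul_eval (hv : Function.Injective v) {P : F[X]}
    (hP : P.degree < Fintype.card ι) :
    ∑ i, nodalWeight univ v i * P.eval (v i) = P.coeff (Fintype.card ι - 1) := by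
  rw [← card_univ] at hP ⊢
  rw [coeff_eq_sum hv.injOn hP]
  simp [nodalWeight, div_eq_mul_inv, prod_inv_distrib, mul_comm]

theorem degree_lt_sub_succ_of_sum_nodalWeight_mul_eval_eq_zero (hv : Function.Injective v)
    {h : F[X]} {s : ℕ} (hs : h.degree < (Fintype.card ι - s : ℕ))
    (hsum : ∑ i, nodalWeight univ v i * (h * X ^ s).eval (v i) = 0) :
    h.degree < (Fintype.card ι - (s + 1) : ℕ) := by
  rw [degree_lt_iff_coeff_zero] at hs ⊢
  have hhX : (h * X ^ s).degree < (Fintype.card ι : WithBot ℕ) := by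
    rw [degree_lt_iff_coeff_zero]
    intro t ht
    rw [coeff_mul_X_pow']
    split_ifs
    · exact hs _ (by omega)
    · rfl
  intro t ht
  by_cases hts : Fintype.card ι - s ≤ t
  · exact hs t hts
  · rw [sum_nodalWeight_mul_eval hv hhX, coeff_mul_X_pow'] at hsum
    rw [if_pos (by omega)] at hsum
    convert hsum using 2
    omega

theorem mem_dualCode_rsCode_iff (hv : Function.Injective v) (hk : k ≤ Fintype.card ι)
    {w : ι → F} : w ∈ dualCode (rsCode v k) ↔
      ∃ h : F[X], h.degree < (Fintype.card ι - k : ℕ) ∧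
        w = fun i => nodalWeight univ v i * h.eval (v i) := by
  constructor
  · -- `h` interpolates `w / nodalWeight`; orthogonality to `X ^ s` kills the coefficient of
    -- `X ^ (card ι - 1 - s)`, one `s < k` at a time.
    intro hw
    set h := interpolate univ v fun i => w i / nodalWeight univ v i
    have hw_eq : w = fun i => nodalWeight univ v i * h.eval (v i) := by
      funext i
      rw [eval_interpolate_at_node _ hv.injOn (mem_univ i),
        mul_div_cancel₀ _ (nodalWeight_ne_zero hv.injOn (mem_univ i))]
    refine ⟨h, ?_, hw_eq⟩
    have hdeg : ∀ s ≤ k, h.degree < (Fintype.card ι - s : ℕ) := by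
      intro s
      induction s with
      | zero => intro _; rw [Nat.sub_zero, ← card_univ]; exact degree_interpolate_lt _ hv.injOn
      | succ s ih =>
        intro hs
        refine degree_lt_sub_succ_of_sum_nodalWeight_mul_eval_eq_zero hv (ih (by omega)) ?_
        have hXs : (fun i => (X ^ s : F[X]).eval (v i)) ∈ rsCode v k :=
          ⟨X ^ s, by rw [degree_X_pow]; exact_mod_cast hs, rfl⟩
        simpa [hw_eq, dotProduct, mul_assoc] using hw _ hXs
    exact hdeg k le_rfl
  · rintro ⟨h, hh, rfl⟩ _ ⟨f, hf, rfl⟩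
    have hhf := degree_mul_lt_of_degree_lt hh hf
    rw [show Fintype.card ι - k + k - 1 = Fintype.card ι - 1 by omega] at hhf
    have hn : (h * f).degree < Fintype.card ι := hhf.trans_le (by exact_mod_cast Nat.sub_le _ 1)
    calc (fun i => nodalWeight univ v i * h.eval (v i)) ⬝ᵥ (fun i => f.eval (v i))
        = ∑ i, nodalWeight univ v i * (h * f).eval (v i) := by simp [dotProduct, mul_assoc]
      _ = (h * f).coeff (Fintype.card ι - 1) := sum_nodalWeight_mul_eval hv hn
      _ = 0 := coeff_eq_zero_of_degree_lt hhf

/-- `q` comes from transporting the dual codeword `nodalWeight univ v` along `π`; transporting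
`nodalWeight univ v * v ^ m` then gives `nodalWeight univ v * ((q * p ^ m) ∘ v)`. -/
theorem exists_mul_pow_eval_mem_rsCode (hv : Function.Injective v) {π : Equiv.Perm ι}
    (hπ : (fun c : ι → F => fun i => c (π i)) '' rsCode v k = rsCode v k)
    (hk : k < Fintype.card ι) {p : F[X]} (hp : ∀ j, p.eval (v j) = v (π j)) :
    ∃ q : F[X], q ≠ 0 ∧ q.degree < (Fintype.card ι - k : ℕ) ∧
      ∀ m < Fintype.card ι - k,
        (fun i => (q * p ^ m).eval (v i)) ∈ rsCode v (Fintype.card ι - k) := by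
  set u := nodalWeight univ v
  have hu : ∀ i, u i ≠ 0 := fun i => nodalWeight_ne_zero hv.injOn (mem_univ i)
  have htransport : ∀ m < Fintype.card ι - k, ∃ h : F[X],
      h.degree < (Fintype.card ι - k : ℕ) ∧ ∀ i, u (π i) * v (π i) ^ m = u i * h.eval (v i) := by
    intro m hm
    have hdual : (fun i => u i * v i ^ m) ∈ dualCode (rsCode v k) :=
      (mem_dualCode_rsCode_iff hv hk.le).2
        ⟨X ^ m, by rw [degree_X_pow]; exact_mod_cast hm, by simp [u]⟩
    obtain ⟨h, hh, heq⟩ := (mem_dualCode_rsCode_iff hv hk.le).1 (comp_perm_mem_dualCode hπ hdual)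
    exact ⟨h, hh, congrFun heq⟩
  obtain ⟨q, hq, hq_eq⟩ := htransport 0 (by omega)
  simp only [pow_zero, mul_one] at hq_eq
  have hq0 : q ≠ 0 := by
    rintro rfl
    obtain ⟨i⟩ := Fintype.card_pos_iff.1 (by omega : 0 < Fintype.card ι)
    exact hu (π i) (by simpa using hq_eq i)
  refine ⟨q, hq0, hq, fun m hm => ?_⟩
  obtain ⟨h, hh, h_eq⟩ := htransport m hm
  refine ⟨h, hh, funext fun i => mul_left_cancel₀ (hu i) ?_⟩
  rw [← h_eq, eval_mul, eval_pow, hp, ← mul_assoc, ← hq_eq]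

end ReedSolomon

theorem perm_of_RS_is_affine_general {F : Type*} [Field F] {n k : ℕ}
    (hk : 1 < k) (hkn : k < n - 1)
    (a : Fin n → F) (ha : Function.Injective a)
    (π : Equiv.Perm (Fin n))
    (hπ : (fun v : Fin n → F => fun i => v (π i)) ''
        {v : Fin n → F | ∃ f : F[X], f.degree < (k : ℕ) ∧ v = fun i => f.eval (a i)} =
      {v : Fin n → F | ∃ f : F[X], f.degree < (k : ℕ) ∧ v = fun i => f.eval (a i)})
    (pπ : F[X]) (hdeg : pπ.degree < (n : ℕ))
    (hval : ∀ j, pπ.eval (a j) = a (π j)) :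
    pπ.degree = 1 := by
  have hπ' : (fun c : Fin n → F => fun i => c (π i)) '' rsCode a k = rsCode a k := hπ
  have hn : Fintype.card (Fin n) = n := Fintype.card_fin n
  have heval : (fun i => pπ.eval (a i)) = fun i => a (π i) := funext hval
  have hpk : pπ.degree < k := by
    refine degree_lt_of_eval_mem_rsCode ha (by omega) (by rwa [hn]) ?_
    rw [heval, comp_perm_mem_iff_of_image_eq hπ']
    exact ⟨X, by rw [degree_X]; exact_mod_cast hk, by simp⟩
  have : Nontrivial (Fin n) := Fin.nontrivial_iff_two_le.2 (by omega)
  have hp_pos : 0 < pπ.natDegree :=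
    natDegree_pos_of_injective_eval (by rw [heval]; exact ha.comp π.injective)
  have hpk' : pπ.natDegree < k :=
    (natDegree_lt_iff_degree_lt (ne_zero_of_natDegree_gt hp_pos)).2 hpk
  obtain ⟨q, hq0, hq, hmem⟩ := exists_mul_pow_eval_mem_rsCode ha hπ' (by omega) hval
  rw [hn] at hq hmem
  have hp_le : pπ.natDegree ≤ 1 :=
    natDegree_le_one_of_degree_mul_pow_lt (n := n) hq0 (by omega) (by omega) hq fun m hm hlt =>
      degree_lt_of_eval_mem_rsCode ha (by omega) (by rwa [hn]) (hmem m hm)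
  rw [← Nat.cast_one, degree_eq_iff_natDegree_eq_of_pos one_pos]
  omega

/-- For 1 < k < n-1, every π ∈ Per(RS(A,k)) is an affine
permutation of A: its interpolating polynomial p_π has degree exactly 1. -/
theorem perm_of_RS_is_affine {F : Type*} [Field F] [Fintype F] {n k : ℕ}
    (hk : 1 < k) (hkn : k < n - 1)
    (a : Fin n → F) (ha : Function.Injective a)
    (π : Equiv.Perm (Fin n))
    (hπ : (fun v : Fin n → F => fun i => v (π i)) ''
        {v : Fin n → F | ∃ f : F[X], f.degree < (k : ℕ) ∧ v = fun i => f.eval (a i)} =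
      {v : Fin n → F | ∃ f : F[X], f.degree < (k : ℕ) ∧ v = fun i => f.eval (a i)})
    (pπ : F[X]) (hdeg : pπ.degree < (n : ℕ))
    (hval : ∀ j, pπ.eval (a j) = a (π j)) :
    pπ.degree = 1 :=
  perm_of_RS_is_affine_general hk hkn a ha π hπ pπ hdeg hval
end

section
/- Let A be an enumeration of the q-1 elements of the multiplicative group F_q^* and 1 < k < q-1. Then Per(RS(A,k)) is isomorphic to the group of linear maps x ↦ ax with a ∈ F_q^*, i.e., to F_q^*. -/
/-!
Since `∑_{x ≠ 0} x ^ u` vanishes unless `q - 1 ∣ u`, the evaluation vector of `g` with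
`deg g < q - 1` pairs with `x ↦ x ^ e` (`1 ≤ e ≤ q - 1`) to `-g_{q-1-e}`. Hence the code
`C = RS(A, k)` is orthogonal to `x ↦ x ^ w` for `1 ≤ w ≤ q - 1 - k`, and a codeword orthogonal
to `C` comes from a polynomial supported in degrees `1, …, q - 1 - k`. A permutation `π`
preserving `C` preserves `C^⊥`, so for `1 ≤ j ≤ m = min (k - 1) (q - 1 - k)` the vector
`x ↦ π(x) ^ j`, lying in `C ∩ C^⊥`, is given by a polynomial `G_j` supported in degrees
`1, …, m`. With `g = G_1`, the polynomials `g ^ j` and `G_j` have degree at most `2m < q - 1`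
and agree on all `q - 1` points, so `m · deg g = deg (g ^ m) ≤ m`, and `g = cX`. Conversely
every scaling `x ↦ cx` preserves `C`.
-/

open Polynomial

namespace Polynomial

theorem natDegree_lt_iff_degree_lt_of_pos {R : Type*} [Semiring R] {p : R[X]} {k : ℕ}
    (hk : 0 < k) :
    p.natDegree < k ↔ p.degree < k := by
  rcases eq_or_ne p 0 with rfl | hp
  · simp [hk]
  · exact natDegree_lt_iff_degree_lt hp

variable {R : Type*} [CommRing R] [IsDomain R]

theorem natDegree_comp_C_mul_X (p : R[X]) {c : R} (hc : c ≠ 0) :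
    (p.comp (C c * X)).natDegree = p.natDegree := by
  rw [natDegree_comp, natDegree_C_mul_X c hc, mul_one]

theorem natDegree_le_one_of_forall_pow_eq_eval {ι : Type*} [Fintype ι] {a : ι → R}
    (ha : Function.Injective a) {m : ℕ} (hm : 2 * m < Fintype.card ι) {g : R[X]}
    (hg : g.natDegree ≤ m)
    (hpow : ∀ j, 1 ≤ j → j ≤ m → ∃ G : R[X], G.natDegree ≤ m ∧
      ∀ i, g.eval (a i) ^ j = G.eval (a i)) :
    g.natDegree ≤ 1 := by
  have hpow_le : ∀ j ≤ m, (g ^ j).natDegree ≤ m := by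
    intro j
    induction j with
    | zero => simp
    | succ j ih =>
      intro hj
      obtain ⟨G, hG, hGeval⟩ := hpow (j + 1) (by omega) hj
      have hprod : (g ^ (j + 1)).natDegree ≤ 2 * m := by
        rw [pow_succ]
        exact natDegree_mul_le.trans (by omega)
      rw [eq_of_natDegree_lt_card_of_eval_eq (g ^ (j + 1)) G ha (by simpa using hGeval)
        (by omega)]
      exact hG
  rcases m.eq_zero_or_pos with rfl | hm0
  · omega
  · have h := hpow_le m le_rfl
    rw [natDegree_pow] at h
    exact Nat.le_of_mul_le_mul_left (by simpa using h) hm0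

end Polynomial

theorem MonoidHom.exists_bijective_of_forall_iff_mem_range {G H : Type*} [Group G] [Group H]
    {σ : G →* H} (hσ : Function.Injective σ) {P : H → Prop} (hP : ∀ h, P h ↔ h ∈ σ.range) :
    ∃ Φ : {h // P h} → G, Function.Bijective Φ ∧
      ∀ (h₁ h₂ : H) (p₁ : P h₁) (p₂ : P h₂) (p₁₂ : P (h₁ * h₂)),
        Φ ⟨h₁ * h₂, p₁₂⟩ = Φ ⟨h₁, p₁⟩ * Φ ⟨h₂, p₂⟩ :=
  ⟨(Equiv.subtypeEquivRight hP).trans (MonoidHom.ofInjective hσ).symm.toEquiv,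
    Equiv.bijective _, fun h₁ h₂ p₁ p₂ _ =>
      map_mul (MonoidHom.ofInjective hσ).symm ⟨h₁, (hP h₁).mp p₁⟩ ⟨h₂, (hP h₂).mp p₂⟩⟩

theorem Nat.dvd_add_iff_eq_sub {N d e : ℕ} (hd : d < N) (he : 0 < e) (heN : e ≤ N) :
    N ∣ d + e ↔ d = N - e := by
  constructor
  · rintro ⟨c, hc⟩
    rcases c with _ | _ | c
    · omega
    · omega
    · nlinarith
  · intro h
    exact ⟨1, by omega⟩

namespace ReedSolomon

variable {F ι : Type*} [Field F]

def code (a : ι → F) (k : ℕ) : Set (ι → F) :=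
  {v | ∃ f : F[X], f.degree < k ∧ v = fun i => f.eval (a i)}

theorem pow_mem_code {a : ι → F} {k e : ℕ} (he : e < k) : (fun i => a i ^ e) ∈ code a k :=
  ⟨X ^ e, by rw [degree_X_pow]; exact_mod_cast he, by simp⟩

theorem image_comp_code_of_apply_eq_mul {a : ι → F} {k : ℕ} (hk : 0 < k) {c : F} (hc : c ≠ 0)
    {π : Equiv.Perm ι} (hπ : ∀ i, a (π i) = c * a i) :
    (fun v => v ∘ π) '' code a k = code a k := by
  have hcomp : ∀ {d : F} (hd : d ≠ 0) {f : F[X]}, f.degree < k → (f.comp (C d * X)).degree < k :=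
    fun hd f hf => by
      rwa [← natDegree_lt_iff_degree_lt_of_pos hk, natDegree_comp_C_mul_X f hd,
        natDegree_lt_iff_degree_lt_of_pos hk]
  ext v
  constructor
  · rintro ⟨_, ⟨f, hf, rfl⟩, rfl⟩
    exact ⟨f.comp (C c * X), hcomp hc hf, funext fun i => by simp [hπ]⟩
  · rintro ⟨f, hf, rfl⟩
    exact ⟨_, ⟨f.comp (C c⁻¹ * X), hcomp (inv_ne_zero hc) hf, rfl⟩,
      funext fun i => by simp [hπ, inv_mul_cancel_left₀ hc]⟩

theorem dotProduct_comp_eq_zero_of_image_eq [Fintype ι] {C : Set (ι → F)} {π : Equiv.Perm ι}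
    (hπ : (fun v => v ∘ π) '' C = C) {u : ι → F} (hu : ∀ w ∈ C, u ⬝ᵥ w = 0) :
    ∀ w ∈ C, (u ∘ π) ⬝ᵥ w = 0 := by
  intro w hw
  rw [← hπ] at hw
  obtain ⟨w, hw, rfl⟩ := hw
  rw [comp_equiv_dotProduct_comp_equiv]
  exact hu w hw

section Units

variable {a : ι → F}

theorem apply_ne_zero (hrange : Set.range a = {x | x ≠ 0}) (i : ι) : a i ≠ 0 :=
  hrange.subset (Set.mem_range_self i)

noncomputable def equivUnits (ha : Function.Injective a) (hrange : Set.range a = {x | x ≠ 0}) :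
    ι ≃ Fˣ :=
  Equiv.ofBijective (fun i => Units.mk0 (a i) (apply_ne_zero hrange i))
    ⟨fun _ _ h => ha (congrArg Units.val h), fun x => by
      obtain ⟨i, hi⟩ : (x : F) ∈ Set.range a := hrange ▸ x.ne_zero
      exact ⟨i, Units.ext hi⟩⟩

@[simp]
theorem coe_equivUnits (ha : Function.Injective a) (hrange : Set.range a = {x | x ≠ 0}) (i : ι) :
    (equivUnits ha hrange i : F) = a i := rfl

theorem apply_equivUnits_symm (ha : Function.Injective a) (hrange : Set.range a = {x | x ≠ 0})
    (x : Fˣ) : a ((equivUnits ha hrange).symm x) = x := by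
  rw [← coe_equivUnits ha hrange, Equiv.apply_symm_apply]

noncomputable def unitsPermHom (ha : Function.Injective a) (hrange : Set.range a = {x | x ≠ 0}) :
    Fˣ →* Equiv.Perm ι :=
  (equivUnits ha hrange).symm.permCongrHom.toMonoidHom.comp (MulAction.toPermHom Fˣ Fˣ)

theorem apply_unitsPermHom (ha : Function.Injective a) (hrange : Set.range a = {x | x ≠ 0})
    (c : Fˣ) (i : ι) : a (unitsPermHom ha hrange c i) = c * a i := by
  simp [unitsPermHom, Equiv.permCongrHom, apply_equivUnits_symm]

theorem unitsPermHom_injective (ha : Function.Injective a)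
    (hrange : Set.range a = {x | x ≠ 0}) : Function.Injective (unitsPermHom ha hrange) :=
  (equivUnits ha hrange).symm.permCongrHom.injective.comp MulAction.toPerm_injective

variable [Fintype F] [Fintype ι]

theorem card_eq_card_sub_one (ha : Function.Injective a) (hrange : Set.range a = {x | x ≠ 0}) :
    Fintype.card ι = Fintype.card F - 1 := by
  classical
  exact (Fintype.card_congr (equivUnits ha hrange)).trans (Fintype.card_units F)

theorem sum_pow_eq_ite (ha : Function.Injective a) (hrange : Set.range a = {x | x ≠ 0}) (u : ℕ) :
    ∑ i, a i ^ u = if Fintype.card F - 1 ∣ u then -1 else 0 := by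
  classical
  rw [← FiniteField.sum_pow_units]
  exact Fintype.sum_equiv (equivUnits ha hrange) _ _ fun i => rfl

theorem eval_dotProduct_pow (ha : Function.Injective a) (hrange : Set.range a = {x | x ≠ 0})
    {g : F[X]} (hg : g.natDegree < Fintype.card F - 1) {e : ℕ} (he : 0 < e)
    (heq : e ≤ Fintype.card F - 1) :
    (fun i => g.eval (a i)) ⬝ᵥ (fun i => a i ^ e) = -g.coeff (Fintype.card F - 1 - e) := by
  set N := Fintype.card F - 1 with hN
  calc (fun i => g.eval (a i)) ⬝ᵥ (fun i => a i ^ e)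
      = ∑ d ∈ Finset.range N, g.coeff d * ∑ i, a i ^ (d + e) := by
        simp only [dotProduct, eval_eq_sum_range' hg, Finset.sum_mul, Finset.mul_sum, mul_assoc,
          ← pow_add]
        exact Finset.sum_comm
    _ = ∑ d ∈ Finset.range N, if d = N - e then -g.coeff d else 0 :=
        Finset.sum_congr rfl fun d hd => by
          rw [sum_pow_eq_ite ha hrange]
          simp only [← hN, Nat.dvd_add_iff_eq_sub (Finset.mem_range.mp hd) he heq]
          split_ifs <;> simp
    _ = -g.coeff (N - e) := by
        rw [Finset.sum_ite_eq', if_pos (Finset.mem_range.mpr (by omega))]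

theorem pow_dotProduct_eq_zero (ha : Function.Injective a) (hrange : Set.range a = {x | x ≠ 0})
    {k w : ℕ} (hw : 0 < w) (hwk : w + k ≤ Fintype.card F - 1) {v : ι → F} (hv : v ∈ code a k) :
    (fun i => a i ^ w) ⬝ᵥ v = 0 := by
  obtain ⟨f, hf, rfl⟩ := hv
  have hfN : f.natDegree < Fintype.card F - 1 := (natDegree_lt_iff_degree_lt_of_pos (by omega)).mpr
    (hf.trans_le (by exact_mod_cast (by omega)))
  rw [dotProduct_comm, eval_dotProduct_pow ha hrange hfN hw (by omega),
    coeff_eq_zero_of_degree_lt (hf.trans_le (by exact_mod_cast (by omega))), neg_zero]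

theorem exists_eq_eval_of_orthogonal (ha : Function.Injective a)
    (hrange : Set.range a = {x | x ≠ 0}) {k : ℕ} (hk : 0 < k) (hkq : k ≤ Fintype.card F - 1)
    {v : ι → F} (hv : v ∈ code a k) (hperp : ∀ w ∈ code a k, v ⬝ᵥ w = 0) :
    ∃ g : F[X], g.natDegree < k ∧ g.natDegree ≤ Fintype.card F - 1 - k ∧ g.coeff 0 = 0 ∧
      v = fun i => g.eval (a i) := by
  set N := Fintype.card F - 1
  obtain ⟨g, hg, rfl⟩ := hv
  have hgk : g.natDegree < k := (natDegree_lt_iff_degree_lt_of_pos hk).mpr hg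
  have hcoeff : ∀ e, 0 < e → e ≤ N → (fun i => a i ^ e) ∈ code a k → g.coeff (N - e) = 0 :=
    fun e he heN hmem => neg_eq_zero.mp
      ((eval_dotProduct_pow ha hrange (by omega) he heN).symm.trans (hperp _ hmem))
  have hconst : (fun i => a i ^ N) ∈ code a k := by
    convert pow_mem_code (a := a) hk using 2 with i
    rw [pow_zero]
    exact FiniteField.pow_card_sub_one_eq_one _ (apply_ne_zero hrange i)
  refine ⟨g, hgk, natDegree_le_iff_coeff_eq_zero.mpr fun d hd => ?_,
    by simpa using hcoeff N (by omega) le_rfl hconst, rfl⟩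
  rcases lt_or_ge d k with hdk | hdk
  · simpa [show N - (N - d) = d by omega] using
      hcoeff (N - d) (by omega) (by omega) (pow_mem_code (by omega))
  · exact coeff_eq_zero_of_natDegree_lt (by omega)

theorem exists_unit_of_image_comp_eq (ha : Function.Injective a)
    (hrange : Set.range a = {x | x ≠ 0}) {k : ℕ} (hk : 1 < k) (hkq : k < Fintype.card F - 1)
    {π : Equiv.Perm ι} (hπ : (fun v => v ∘ π) '' code a k = code a k) :
    ∃ c : Fˣ, ∀ i, a (π i) = c * a i := by
  set m := min (k - 1) (Fintype.card F - 1 - k)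
  have hperm_pow : ∀ j, 1 ≤ j → j ≤ m → ∃ G : F[X], G.natDegree ≤ m ∧ G.coeff 0 = 0 ∧
      ∀ i, a (π i) ^ j = G.eval (a i) := by
    intro j hj1 hjm
    have hmem : (fun i => a i ^ j) ∘ π ∈ code a k := hπ ▸ ⟨_, pow_mem_code (by omega), rfl⟩
    obtain ⟨G, hGk, hGq, hG0, hGeval⟩ := exists_eq_eval_of_orthogonal ha hrange (by omega)
      hkq.le hmem (dotProduct_comp_eq_zero_of_image_eq hπ fun w hw =>
        pow_dotProduct_eq_zero ha hrange (by omega) (by omega) hw)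
    exact ⟨G, by omega, hG0, congrFun hGeval⟩
  obtain ⟨g, hgm, hg0, hgeval⟩ := hperm_pow 1 le_rfl (by omega)
  simp only [pow_one] at hgeval
  have hg1 : g.natDegree ≤ 1 := by
    refine natDegree_le_one_of_forall_pow_eq_eval ha (m := m)
      (by rw [card_eq_card_sub_one ha hrange]; omega) hgm fun j hj1 hjm => ?_
    obtain ⟨G, hG, -, hGeval⟩ := hperm_pow j hj1 hjm
    exact ⟨G, hG, fun i => by rw [← hgeval, hGeval]⟩
  have hlin : ∀ i, a (π i) = g.coeff 1 * a i := fun i => by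
    rw [hgeval, eq_X_add_C_of_natDegree_le_one hg1]
    simp [hg0]
  have hne : Nonempty ι := Fintype.card_pos_iff.mp (by rw [card_eq_card_sub_one ha hrange]; omega)
  have hc : g.coeff 1 ≠ 0 := fun h => by
    obtain ⟨i⟩ := hne
    exact apply_ne_zero hrange (π i) (by rw [hlin, h, zero_mul])
  exact ⟨Units.mk0 _ hc, hlin⟩

end Units
end ReedSolomon

/-- If A is an enumeration of the q-1 nonzero elements of F_q and
1 < k < q-1, then Per(RS(A,k)) is isomorphic to the multiplicative group F_q^*
(the group of linear maps x ↦ ax, a ≠ 0). -/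
theorem perm_group_RS_mult_group {F : Type*} [Field F] [Fintype F] {n k : ℕ}
    (hk : 1 < k) (hkq : k < Fintype.card F - 1)
    (a : Fin n → F) (ha : Function.Injective a)
    (hrange : Set.range a = {x : F | x ≠ 0}) :
    ∃ Φ : {π : Equiv.Perm (Fin n) //
        (fun v : Fin n → F => fun i => v (π i)) ''
            {v : Fin n → F | ∃ f : F[X], f.degree < (k : ℕ) ∧ v = fun i => f.eval (a i)} =
          {v : Fin n → F | ∃ f : F[X], f.degree < (k : ℕ) ∧ v = fun i => f.eval (a i)}} →
      Fˣ,
      Function.Bijective Φ ∧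
      ∀ (π₁ π₂ : Equiv.Perm (Fin n)) (h₁ : _) (h₂ : _) (h₁₂ : _),
        Φ ⟨π₁ * π₂, h₁₂⟩ = Φ ⟨π₁, h₁⟩ * Φ ⟨π₂, h₂⟩ := by
  refine MonoidHom.exists_bijective_of_forall_iff_mem_range
    (ReedSolomon.unitsPermHom_injective ha hrange) fun π => ⟨fun hπ => ?_, ?_⟩
  · obtain ⟨c, hc⟩ := ReedSolomon.exists_unit_of_image_comp_eq ha hrange hk hkq hπ
    exact ⟨c, Equiv.ext fun i => ha (by rw [ReedSolomon.apply_unitsPermHom ha hrange, hc])⟩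
  · rintro ⟨c, rfl⟩
    exact ReedSolomon.image_comp_code_of_apply_eq_mul (by omega) c.ne_zero
      (ReedSolomon.apply_unitsPermHom ha hrange c)
end

section
/- Let A = (a_1,...,a_n) be distinct elements of F_q, 0 < k < n, and π ∈ Per(RS(A,k)) with interpolating polynomial p_π. Let g be a polynomial of degree < n with g(a_j) ≠ 0 for all j such that RS(A,k)^⊥ = g(A) ⋆ RS(A, n-k). Then for each 0 ≤ i < n-k there exists g_i ∈ F_q[x] of degree < n-k such that g(p_π(a_j))·p_π(a_j)^i = g(a_j)·g_i(a_j) for all j = 1,...,n. -/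
open Polynomial

/-- With π ∈ Per(RS(A,k)), p_π its interpolating polynomial, and
g of degree < n with g(a_j) ≠ 0 realizing RS(A,k)^⊥ = g(A) ⋆ RS(A, n-k), for
each 0 ≤ i < n-k there is g_i of degree < n-k with
g(p_π(a_j))·p_π(a_j)^i = g(a_j)·g_i(a_j) for all j. -/
theorem dual_side_powers {F : Type*} [Field F] [Fintype F] {n k : ℕ}
    (hk : 0 < k) (hkn : k < n)
    (a : Fin n → F) (ha : Function.Injective a)
    (π : Equiv.Perm (Fin n))
    (hπ : (fun v : Fin n → F => fun i => v (π i)) ''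
        {v : Fin n → F | ∃ f : F[X], f.degree < (k : ℕ) ∧ v = fun i => f.eval (a i)} =
      {v : Fin n → F | ∃ f : F[X], f.degree < (k : ℕ) ∧ v = fun i => f.eval (a i)})
    (pπ : F[X]) (hdeg : pπ.degree < (n : ℕ))
    (hval : ∀ j, pπ.eval (a j) = a (π j))
    (g : F[X]) (hgdeg : g.degree < (n : ℕ)) (hgne : ∀ j, g.eval (a j) ≠ 0)
    (hdual : {w : Fin n → F | ∀ c ∈
        {v : Fin n → F | ∃ f : F[X], f.degree < (k : ℕ) ∧ v = fun i => f.eval (a i)},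
      ∑ i, w i * c i = 0} =
      {v : Fin n → F | ∃ f : F[X], f.degree < ((n - k : ℕ) : ℕ) ∧
        v = fun i => g.eval (a i) * f.eval (a i)}) :
    ∀ i < n - k, ∃ gi : F[X], gi.degree < ((n - k : ℕ) : ℕ) ∧
      ∀ j, g.eval (pπ.eval (a j)) * (pπ.eval (a j)) ^ i =
        g.eval (a j) * gi.eval (a j) := by
  intro i hi
  set RS := {v : Fin n → F | ∃ f : F[X], f.degree < (k : ℕ) ∧ v = fun i => f.eval (a i)}
  -- the vector g(a)·a^i is in the dual of RS
  have hmem : (fun j => g.eval (a j) * (a j) ^ i) ∈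
      {w : Fin n → F | ∀ c ∈ RS, ∑ i, w i * c i = 0} := by
    rw [hdual]
    exact ⟨X ^ i, by simpa using (Nat.cast_lt.mpr hi : (i : WithBot ℕ) < (n - k : ℕ)), by
      funext j; simp⟩
  -- the vector w_j = g(a_{πj})·a_{πj}^i is in the dual of RS
  have hw : (fun j => g.eval (a (π j)) * (a (π j)) ^ i) ∈
      {w : Fin n → F | ∀ c ∈ RS, ∑ i, w i * c i = 0} := by
    intro c hc
    -- c = (something in RS) composed with π
    have : c ∈ (fun v : Fin n → F => fun i => v (π i)) '' RS := by rw [hπ]; exact hc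
    obtain ⟨v, hv, hvc⟩ := this
    have hc' : ∀ j, c j = v (π j) := fun j => by rw [← hvc]
    calc ∑ j, g.eval (a (π j)) * (a (π j)) ^ i * c j
        = ∑ j, g.eval (a (π j)) * (a (π j)) ^ i * v (π j) := by
          refine Finset.sum_congr rfl fun j _ => by rw [hc' j]
      _ = ∑ j, g.eval (a j) * (a j) ^ i * v j :=
          Fintype.sum_equiv π _ _ (fun j => rfl)
      _ = 0 := hmem v hv
  rw [hdual] at hw
  obtain ⟨gi, hgi, hgi2⟩ := hw
  refine ⟨gi, hgi, fun j => ?_⟩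
  have := congrFun hgi2 j
  simp only [hval j]
  exact this
end
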